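/- (Spin-squeezing/metrology bound.) Let J₁, J₂, J₃ be self-adjoint linear operators on H satisfying the commutation relation J₃∘J₁ − J₁∘J₃ = i·J₂. Suppose ΔJ₁ > 0 and ΔJ₃ > 0, and let ψ⊥ be any unit vector orthogonal to ψ. Then there exists a sign s ∈ {+1, −1} such that, with Θ = |⟪ψ, (J₁/ΔJ₁ + s·i·J₃/ΔJ₃) ψ⊥⟫|², one has 1 − Θ/2 ≥ 0 and 4·ΔJ₁²·ΔJ₃²·(1 − Θ/2)² ≥ ⟨J₂⟩²; in particular, if ⟨J₂⟩ ≠ 0, then ΔJ₁²/⟨J₂⟩² ≥ 1/(4·ΔJ₃²·(1 − Θ/2)²). -/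

import Mathlib

/-! With `xₖ = (Jₖ - ⟨Jₖ⟩) ψ` one has `‖xₖ‖ = ΔJₖ`, and the commutation relation gives
`Im ⟪x₁, x₃⟫ = -⟨J₂⟩ / 2`. Because `ψ⊥ ⟂ ψ`, the amplitude defining `Θ` equals `⟪w, ψ⊥⟫` for
`w = x₁ / ΔJ₁ - s i x₃ / ΔJ₃`, and the sign `s = sign ⟨J₂⟩` makes
`‖w‖² = 2 - |⟨J₂⟩| / (ΔJ₁ ΔJ₃)`. Cauchy–Schwarz, `Θ ≤ ‖w‖²`, rearranges to the bound. -/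

open scoped ComplexInnerProductSpace BigOperators

noncomputable section

variable {H : Type*} [NormedAddCommGroup H] [InnerProductSpace ℂ H]

/-- Expectation value ⟨A⟩ = Re ⟪ψ, A ψ⟫ of an operator in the state ψ. -/
def expVal (ψ : H) (A : H →ₗ[ℂ] H) : ℝ := (⟪ψ, A ψ⟫).re

/-- Variance ΔA² = ⟨A²⟩ − ⟨A⟩². -/
def varOf (ψ : H) (A : H →ₗ[ℂ] H) : ℝ := (⟪ψ, A (A ψ)⟫).re - (expVal ψ A) ^ 2

/-- Standard deviation ΔA = √(ΔA²). -/
def stdDev (ψ : H) (A : H →ₗ[ℂ] H) : ℝ := Real.sqrt (varOf ψ A)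

/-- The real number i⟨[A,B]⟩. -/
def commRe (ψ : H) (A B : H →ₗ[ℂ] H) : ℝ :=
  (Complex.I * ⟪ψ, (A ∘ₗ B - B ∘ₗ A) ψ⟫).re

/-- The projection Π = I − |ψ⟩⟨ψ|. -/
def projPerp (ψ : H) : H →ₗ[ℂ] H :=
  LinearMap.id - ((innerSL ℂ ψ).smulRight ψ).toLinearMap

/-- The deviation operator Ă = A − ⟨A⟩I. -/
def devOp (ψ : H) (A : H →ₗ[ℂ] H) : H →ₗ[ℂ] H :=
  A - (expVal ψ A : ℂ) • LinearMap.id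

/-- The operator C = −i[A,B]. -/
def opC (A B : H →ₗ[ℂ] H) : H →ₗ[ℂ] H := (-Complex.I) • (A ∘ₗ B - B ∘ₗ A)

/-- The operator F = ĂB̆ + B̆Ă. -/
def opF (ψ : H) (A B : H →ₗ[ℂ] H) : H →ₗ[ℂ] H :=
  devOp ψ A ∘ₗ devOp ψ B + devOp ψ B ∘ₗ devOp ψ A

lemma exists_sign_mul_eq_abs (e : ℝ) : ∃ s : ℝ, (s = 1 ∨ s = -1) ∧ s * e = |e| := by
  rcases le_or_gt 0 e with he | he
  · exact ⟨1, .inl rfl, by rw [one_mul, abs_of_nonneg he]⟩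
  · exact ⟨-1, .inr rfl, by rw [neg_one_mul, abs_of_neg he]⟩

lemma norm_sub_ofReal_mul_I_smul_sq (u v : H) (s : ℝ) :
    ‖u - ((s : ℂ) * Complex.I) • v‖ ^ 2 = ‖u‖ ^ 2 + 2 * s * (⟪u, v⟫).im + s ^ 2 * ‖v‖ ^ 2 := by
  rw [@norm_sub_sq ℂ, inner_smul_right, norm_smul, mul_pow, norm_mul, Complex.norm_I,
    Complex.norm_real, Real.norm_eq_abs, mul_one, sq_abs]
  simp only [RCLike.re_to_complex, Complex.mul_re, Complex.ofReal_re, Complex.ofReal_im,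
    Complex.I_re, Complex.I_im, Complex.mul_im]
  ring

section Deviation

variable {ψ : H} {A B C : H →ₗ[ℂ] H}

lemma LinearMap.IsSymmetric.inner_apply_eq_expVal (hA : A.IsSymmetric) (ψ : H) :
    ⟪ψ, A ψ⟫ = (expVal ψ A : ℂ) :=
  (Complex.conj_eq_iff_re.mp (by rw [inner_conj_symm]; exact hA ψ ψ)).symm

@[simp]
lemma devOp_apply (A : H →ₗ[ℂ] H) (ψ φ : H) :
    devOp ψ A φ = A φ - (expVal ψ A : ℂ) • φ := rfl

lemma inner_devOp_apply_self (hψ : ‖ψ‖ = 1) (hA : A.IsSymmetric) (hB : B.IsSymmetric) :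
    ⟪devOp ψ A ψ, devOp ψ B ψ⟫ = ⟪A ψ, B ψ⟫ - (expVal ψ A : ℂ) * expVal ψ B := by
  have hψψ : ⟪ψ, ψ⟫ = (1 : ℂ) := by rw [inner_self_eq_norm_sq_to_K, hψ]; norm_num
  simp only [devOp_apply, inner_sub_left, inner_sub_right, inner_smul_left, inner_smul_right,
    hψψ, hA ψ ψ, hA.inner_apply_eq_expVal, hB.inner_apply_eq_expVal, Complex.conj_ofReal]
  ring

lemma norm_devOp_apply_self_sq (hψ : ‖ψ‖ = 1) (hA : A.IsSymmetric) :
    ‖devOp ψ A ψ‖ ^ 2 = varOf ψ A := by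
  have h := congrArg Complex.re (inner_devOp_apply_self hψ hA hA)
  rw [inner_self_eq_norm_sq_to_K, hA] at h
  rw [varOf, sq (expVal ψ A)]
  exact_mod_cast h

lemma norm_devOp_apply_self (hψ : ‖ψ‖ = 1) (hA : A.IsSymmetric) :
    ‖devOp ψ A ψ‖ = stdDev ψ A := by
  rw [stdDev, ← norm_devOp_apply_self_sq hψ hA, Real.sqrt_sq (norm_nonneg _)]

lemma stdDev_sq (hψ : ‖ψ‖ = 1) (hA : A.IsSymmetric) : stdDev ψ A ^ 2 = varOf ψ A := by
  rw [← norm_devOp_apply_self hψ hA, norm_devOp_apply_self_sq hψ hA]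

lemma norm_inv_stdDev_smul_devOp_apply_self (hψ : ‖ψ‖ = 1) (hA : A.IsSymmetric)
    (hΔ : 0 < stdDev ψ A) : ‖(stdDev ψ A : ℂ)⁻¹ • devOp ψ A ψ‖ = 1 := by
  rw [norm_smul, norm_inv, Complex.norm_real, Real.norm_of_nonneg hΔ.le,
    norm_devOp_apply_self hψ hA, inv_mul_cancel₀ hΔ.ne']

lemma im_inner_apply_self_of_commutator (hA : A.IsSymmetric) (hB : B.IsSymmetric)
    (hC : C.IsSymmetric) (hcomm : B ∘ₗ A - A ∘ₗ B = Complex.I • C) :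
    (⟪A ψ, B ψ⟫).im = -expVal ψ C / 2 := by
  have h : ⟪A ψ, B ψ⟫ - starRingEnd ℂ ⟪A ψ, B ψ⟫ = -(Complex.I * expVal ψ C) := by
    have hcommψ : B (A ψ) - A (B ψ) = Complex.I • C ψ := by
      simpa using congrArg (fun T => T ψ) hcomm
    rw [inner_conj_symm, hA, hB, ← inner_sub_right, ← neg_sub, hcommψ, inner_neg_right,
      inner_smul_right, hC.inner_apply_eq_expVal]
  have h' := congrArg Complex.im h
  simp only [Complex.sub_im, Complex.conj_im, Complex.neg_im, Complex.mul_im, Complex.I_re,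
    Complex.I_im, Complex.ofReal_re, Complex.ofReal_im] at h'
  linarith

lemma im_inner_devOp_apply_self_of_commutator (hψ : ‖ψ‖ = 1) (hA : A.IsSymmetric)
    (hB : B.IsSymmetric) (hC : C.IsSymmetric) (hcomm : B ∘ₗ A - A ∘ₗ B = Complex.I • C) :
    (⟪devOp ψ A ψ, devOp ψ B ψ⟫).im = -expVal ψ C / 2 := by
  rw [inner_devOp_apply_self hψ hA hB, Complex.sub_im, ← Complex.ofReal_mul, Complex.ofReal_im,
    sub_zero, im_inner_apply_self_of_commutator hA hB hC hcomm]

lemma inner_apply_eq_inner_devOp_of_inner_eq_zero (hA : A.IsSymmetric) {φ : H}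
    (hφ : ⟪ψ, φ⟫ = 0) : ⟪ψ, A φ⟫ = ⟪devOp ψ A ψ, φ⟫ := by
  rw [devOp_apply, inner_sub_left, inner_smul_left, hφ, mul_zero, sub_zero, hA]

end Deviation

lemma metrology_bound_of_le {Δ₁ Δ₃ e Θ : ℝ} (h₁ : 0 < Δ₁) (h₃ : 0 < Δ₃)
    (hΘ : Θ ≤ 2 - |e| / (Δ₁ * Δ₃)) :
    0 ≤ 1 - Θ / 2 ∧ 4 * Δ₁ ^ 2 * Δ₃ ^ 2 * (1 - Θ / 2) ^ 2 ≥ e ^ 2 ∧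
      (e ≠ 0 → Δ₁ ^ 2 / e ^ 2 ≥ 1 / (4 * Δ₃ ^ 2 * (1 - Θ / 2) ^ 2)) := by
  have h₁₃ : 0 < 2 * Δ₁ * Δ₃ := by positivity
  have key : |e| ≤ 2 * Δ₁ * Δ₃ * (1 - Θ / 2) := by
    have := (div_le_iff₀ (mul_pos h₁ h₃)).mp (by linarith : |e| / (Δ₁ * Δ₃) ≤ 2 - Θ)
    linarith
  have hsq : e ^ 2 ≤ 4 * Δ₁ ^ 2 * Δ₃ ^ 2 * (1 - Θ / 2) ^ 2 := by
    rw [← sq_abs]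
    calc |e| ^ 2 ≤ (2 * Δ₁ * Δ₃ * (1 - Θ / 2)) ^ 2 := pow_le_pow_left₀ (abs_nonneg e) key 2
      _ = _ := by ring
  refine ⟨nonneg_of_mul_nonneg_right ((abs_nonneg e).trans key) h₁₃, hsq, fun he => ?_⟩
  have ht : 0 < 1 - Θ / 2 := pos_of_mul_pos_right ((abs_pos.mpr he).trans_le key) h₁₃.le
  rw [ge_iff_le, div_le_div_iff₀ (by positivity) (by positivity)]
  linarith

theorem spin_squeezing_metrology_bound_general
    {H : Type*} [NormedAddCommGroup H] [InnerProductSpace ℂ H]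
    (J₁ J₂ J₃ : H →ₗ[ℂ] H)
    (hJ₁ : J₁.IsSymmetric) (hJ₂ : J₂.IsSymmetric) (hJ₃ : J₃.IsSymmetric)
    (hcomm : J₃ ∘ₗ J₁ - J₁ ∘ₗ J₃ = Complex.I • J₂)
    (ψ : H) (hψ : ‖ψ‖ = 1)
    (hΔ₁ : 0 < stdDev ψ J₁) (hΔ₃ : 0 < stdDev ψ J₃)
    (ψperp : H) (hperpunit : ‖ψperp‖ = 1) (hperp : ⟪ψ, ψperp⟫ = 0) :
    ∃ s : ℝ, (s = 1 ∨ s = -1) ∧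
      ∃ Θ : ℝ,
        Θ = ‖⟪ψ, (((stdDev ψ J₁ : ℂ))⁻¹ • J₁
            + ((s : ℂ) * Complex.I * ((stdDev ψ J₃ : ℂ))⁻¹) • J₃) ψperp⟫‖ ^ 2
        ∧ 0 ≤ 1 - Θ / 2
        ∧ 4 * varOf ψ J₁ * varOf ψ J₃ * (1 - Θ / 2) ^ 2 ≥ (expVal ψ J₂) ^ 2
        ∧ (expVal ψ J₂ ≠ 0 →
            varOf ψ J₁ / (expVal ψ J₂) ^ 2
              ≥ 1 / (4 * varOf ψ J₃ * (1 - Θ / 2) ^ 2)) := by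
  obtain ⟨s, hs, hse⟩ := exists_sign_mul_eq_abs (expVal ψ J₂)
  refine ⟨s, hs, _, rfl, ?_⟩
  rw [← stdDev_sq hψ hJ₁, ← stdDev_sq hψ hJ₃]
  set Δ₁ := stdDev ψ J₁
  set Δ₃ := stdDev ψ J₃
  set u := (Δ₁ : ℂ)⁻¹ • devOp ψ J₁ ψ
  set v := (Δ₃ : ℂ)⁻¹ • devOp ψ J₃ ψ
  have hu : ‖u‖ = 1 := norm_inv_stdDev_smul_devOp_apply_self hψ hJ₁ hΔ₁
  have hv : ‖v‖ = 1 := norm_inv_stdDev_smul_devOp_apply_self hψ hJ₃ hΔ₃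
  have huv : (⟪u, v⟫).im = -expVal ψ J₂ / (2 * (Δ₁ * Δ₃)) := by
    have h := im_inner_devOp_apply_self_of_commutator hψ hJ₁ hJ₃ hJ₂ hcomm
    simp only [u, v, inner_smul_left, inner_smul_right, Complex.conj_ofReal,
      ← Complex.ofReal_inv, ← mul_assoc, ← Complex.ofReal_mul, Complex.im_ofReal_mul, h]
    field_simp
  have hvec : ⟪ψ, ((Δ₁ : ℂ)⁻¹ • J₁ + ((s : ℂ) * Complex.I * (Δ₃ : ℂ)⁻¹) • J₃) ψperp⟫
      = ⟪u - ((s : ℂ) * Complex.I) • v, ψperp⟫ := by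
    simp only [u, v, LinearMap.add_apply, LinearMap.smul_apply, inner_add_right,
      inner_smul_right, inner_sub_left, inner_smul_left, map_mul, Complex.conj_ofReal,
      Complex.conj_I, map_inv₀, inner_apply_eq_inner_devOp_of_inner_eq_zero hJ₁ hperp,
      inner_apply_eq_inner_devOp_of_inner_eq_zero hJ₃ hperp]
    ring
  have hs2 : s ^ 2 = 1 := by rcases hs with rfl | rfl <;> norm_num
  refine metrology_bound_of_le hΔ₁ hΔ₃ ?_
  calc ‖⟪ψ, _⟫‖ ^ 2 ≤ ‖u - ((s : ℂ) * Complex.I) • v‖ ^ 2 := by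
        rw [hvec]
        gcongr
        exact (norm_inner_le_norm _ _).trans_eq (by rw [hperpunit, mul_one])
    _ = 2 - |expVal ψ J₂| / (Δ₁ * Δ₃) := by
        rw [norm_sub_ofReal_mul_I_smul_sq, hu, hv, huv, hs2, ← hse]
        field_simp
        ring

theorem spin_squeezing_metrology_bound
    {H : Type*} [NormedAddCommGroup H] [InnerProductSpace ℂ H] [FiniteDimensional ℂ H]
    (J₁ J₂ J₃ : H →ₗ[ℂ] H)
    (hJ₁ : J₁.IsSymmetric) (hJ₂ : J₂.IsSymmetric) (hJ₃ : J₃.IsSymmetric)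
    (hcomm : J₃ ∘ₗ J₁ - J₁ ∘ₗ J₃ = Complex.I • J₂)
    (ψ : H) (hψ : ‖ψ‖ = 1)
    (hΔ₁ : 0 < stdDev ψ J₁) (hΔ₃ : 0 < stdDev ψ J₃)
    (ψperp : H) (hperpunit : ‖ψperp‖ = 1) (hperp : ⟪ψ, ψperp⟫ = 0) :
    ∃ s : ℝ, (s = 1 ∨ s = -1) ∧
      ∃ Θ : ℝ,
        Θ = ‖⟪ψ, (((stdDev ψ J₁ : ℂ))⁻¹ • J₁
            + ((s : ℂ) * Complex.I * ((stdDev ψ J₃ : ℂ))⁻¹) • J₃) ψperp⟫‖ ^ 2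
        ∧ 0 ≤ 1 - Θ / 2
        ∧ 4 * varOf ψ J₁ * varOf ψ J₃ * (1 - Θ / 2) ^ 2 ≥ (expVal ψ J₂) ^ 2
        ∧ (expVal ψ J₂ ≠ 0 →
            varOf ψ J₁ / (expVal ψ J₂) ^ 2
              ≥ 1 / (4 * varOf ψ J₃ * (1 - Θ / 2) ^ 2)) :=
  spin_squeezing_metrology_bound_general J₁ J₂ J₃ hJ₁ hJ₂ hJ₃ hcomm ψ hψ hΔ₁ hΔ₃ ψperp hperpunit
    hperp
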